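/- Let θ > 0. Then there exists a constant K > 0 such that for all s ∈ ℂ with Re s > 0 and all real w ≥ 0, writing μ = (s² + w²)^{1/2} (principal square root) and r = √(|s² + w²| + |s|²), one has w·r ≤ K·|θμ + s|·|μ + θs|. (This bounds the off-diagonal coefficient θ i ω_A (μ + θs)^{-1} appearing in the tangential mode coefficients, completing the verification of the Kreiss condition for the new boundary conditions.) -/

import Mathlib

theorem kreiss_aux (m θ a1 a2 b1 b2 : ℝ) (hm1 : m ≤ θ ^ 2) (hm2 : m ≤ 1) (hθ : 0 ≤ θ)
    (hdot : 0 ≤ a1 * b1 + a2 * b2) :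
    m * ((a1 ^ 2 + a2 ^ 2) + (b1 ^ 2 + b2 ^ 2)) ≤ (θ * a1 + b1) ^ 2 + (θ * a2 + b2) ^ 2 := by
  nlinarith [mul_nonneg hθ hdot,
    mul_le_mul_of_nonneg_right hm1 (sq_nonneg a1),
    mul_le_mul_of_nonneg_right hm1 (sq_nonneg a2),
    mul_le_mul_of_nonneg_right hm2 (sq_nonneg b1),
    mul_le_mul_of_nonneg_right hm2 (sq_nonneg b2)]

/-- Uniform bound on the off-diagonal mode coefficient for the new boundary conditions:
for `θ > 0` there is a constant `K > 0` such that, for all `s` with `Re s > 0` and all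
`w ≥ 0`, with `μ = (s² + w²)^{1/2}` (principal square root) and
`r = √(|s² + w²| + |s|²)`, one has `w·r ≤ K|θμ + s||μ + θs|`. -/
theorem kreiss_condition_offdiagonal (θ : ℝ) (hθ : 0 < θ) :
    ∃ K : ℝ, 0 < K ∧ ∀ s : ℂ, 0 < s.re → ∀ w : ℝ, 0 ≤ w →
      w * Real.sqrt (‖s ^ 2 + (w : ℂ) ^ 2‖ + (‖s‖) ^ 2) ≤
        K * ‖(θ : ℂ) * ((s ^ 2 + (w : ℂ) ^ 2) ^ ((1 : ℂ) / 2)) + s‖ *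
          ‖(s ^ 2 + (w : ℂ) ^ 2) ^ ((1 : ℂ) / 2) + (θ : ℂ) * s‖ := by
  set m : ℝ := min (θ ^ 2) 1 with hmdef
  have hm0 : 0 < m := lt_min (by positivity) one_pos
  have hm1 : m ≤ θ ^ 2 := min_le_left _ _
  have hm2 : m ≤ 1 := min_le_right _ _
  refine ⟨m⁻¹, by positivity, ?_⟩
  intro s hs w hw
  set z : ℂ := s ^ 2 + (w : ℂ) ^ 2 with hzdef
  have hzre : z.re = s.re ^ 2 - s.im ^ 2 + w ^ 2 := by
    simp [hzdef, pow_two, Complex.add_re, Complex.mul_re]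
  have hzim : z.im = 2 * s.re * s.im := by
    simp [hzdef, pow_two, Complex.add_im, Complex.mul_im]
    ring
  set μ : ℂ := z ^ ((1 : ℂ) / 2) with hmu
  have h2 : ((1 : ℂ) / 2) = (2⁻¹ : ℂ) := by norm_num
  have hreμ : 0 ≤ μ.re := by
    rw [hmu, h2, Complex.cpow_inv_two_re]; positivity
  have himμ : 0 ≤ μ.im * s.im := by
    rcases le_or_gt 0 s.im with h | h
    · have hz0 : 0 ≤ z.im := by rw [hzim]; positivity
      rw [hmu, h2, Complex.cpow_inv_two_im_eq_sqrt hz0]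
      exact mul_nonneg (Real.sqrt_nonneg _) h
    · have hz0 : z.im < 0 := by rw [hzim]; nlinarith
      rw [hmu, h2, Complex.cpow_inv_two_im_eq_neg_sqrt hz0]
      have := Real.sqrt_nonneg ((‖z‖ - z.re) / 2)
      nlinarith
  have hz0 : z ≠ 0 := by
    intro h
    have h1 : z.re = 0 := by rw [h]; simp
    have h2' : z.im = 0 := by rw [h]; simp
    rw [hzre] at h1; rw [hzim] at h2'
    have hsim : s.im = 0 := by nlinarith
    nlinarith
  have hμsq : μ * μ = z := by
    rw [hmu, ← Complex.cpow_add _ _ hz0]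
    norm_num
  have habs : ‖z‖ = (‖μ‖) ^ 2 := by
    rw [← hμsq, norm_mul]; ring
  have ha : (‖μ‖) ^ 2 = μ.re ^ 2 + μ.im ^ 2 := by
    rw [Complex.sq_norm, Complex.normSq_apply]; ring
  have hb : (‖s‖) ^ 2 = s.re ^ 2 + s.im ^ 2 := by
    rw [Complex.sq_norm, Complex.normSq_apply]; ring
  have hdot : 0 ≤ μ.re * s.re + μ.im * s.im :=
    add_nonneg (mul_nonneg hreμ hs.le) himμ
  set A : ℝ := ‖(θ : ℂ) * μ + s‖ with hAdef
  set B : ℝ := ‖μ + (θ : ℂ) * s‖ with hBdef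
  have hA : A ^ 2 = (θ * μ.re + s.re) ^ 2 + (θ * μ.im + s.im) ^ 2 := by
    rw [hAdef, Complex.sq_norm, Complex.normSq_apply]
    simp [Complex.add_re, Complex.add_im, Complex.mul_re, Complex.mul_im]
    ring
  have hB : B ^ 2 = (μ.re + θ * s.re) ^ 2 + (μ.im + θ * s.im) ^ 2 := by
    rw [hBdef, Complex.sq_norm, Complex.normSq_apply]
    simp [Complex.add_re, Complex.add_im, Complex.mul_re, Complex.mul_im]
    ring
  have hX0 : (0:ℝ) ≤ m * ((‖μ‖) ^ 2 + (‖s‖) ^ 2) := by positivity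
  have hA2 : m * ((‖μ‖) ^ 2 + (‖s‖) ^ 2) ≤ A ^ 2 := by
    rw [hA, ha, hb]
    exact kreiss_aux m θ μ.re μ.im s.re s.im hm1 hm2 hθ.le hdot
  have hB2 : m * ((‖μ‖) ^ 2 + (‖s‖) ^ 2) ≤ B ^ 2 := by
    rw [hB, ha, hb]
    have := kreiss_aux m θ s.re s.im μ.re μ.im hm1 hm2 hθ.le (by linarith)
    nlinarith [this]
  have hApos : 0 ≤ A := norm_nonneg _
  have hBpos : 0 ≤ B := norm_nonneg _
  have hXsq : (m * ((‖μ‖) ^ 2 + (‖s‖) ^ 2)) ^ 2 ≤ (A * B) ^ 2 := by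
    calc (m * ((‖μ‖) ^ 2 + (‖s‖) ^ 2)) ^ 2
        = (m * ((‖μ‖) ^ 2 + (‖s‖) ^ 2)) * (m * ((‖μ‖) ^ 2 + (‖s‖) ^ 2)) := sq _
      _ ≤ A ^ 2 * B ^ 2 := mul_le_mul hA2 hB2 hX0 (sq_nonneg A)
      _ = (A * B) ^ 2 := by ring
  have hXAB : m * ((‖μ‖) ^ 2 + (‖s‖) ^ 2) ≤ A * B :=
    le_of_pow_le_pow_left₀ two_ne_zero (mul_nonneg hApos hBpos) hXsq
  set r : ℝ := Real.sqrt (‖z‖ + (‖s‖) ^ 2) with hrdef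
  have hr0 : 0 ≤ r := Real.sqrt_nonneg _
  have hwr : w ≤ r := by
    have hw2 : w ^ 2 ≤ ‖z‖ + (‖s‖) ^ 2 := by
      have : ((w : ℂ)) ^ 2 = z - s ^ 2 := by rw [hzdef]; ring
      calc w ^ 2 = ‖(w : ℂ) ^ 2‖ := by
            rw [norm_pow, Complex.norm_of_nonneg hw]
        _ = ‖z - s ^ 2‖ := by rw [this]
        _ ≤ ‖z‖ + ‖s ^ 2‖ := norm_sub_le _ _
        _ = ‖z‖ + (‖s‖) ^ 2 := by rw [norm_pow]
    calc w = Real.sqrt (w ^ 2) := (Real.sqrt_sq hw).symm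
      _ ≤ r := Real.sqrt_le_sqrt hw2
  have hr2 : r * r = (‖μ‖) ^ 2 + (‖s‖) ^ 2 := by
    rw [hrdef, habs]
    exact Real.mul_self_sqrt (by positivity)
  calc w * r ≤ r * r := mul_le_mul_of_nonneg_right hwr hr0
    _ = m⁻¹ * (m * ((‖μ‖) ^ 2 + (‖s‖) ^ 2)) := by
        rw [hr2]; field_simp
    _ ≤ m⁻¹ * (A * B) := mul_le_mul_of_nonneg_left hXAB (by positivity)
    _ = m⁻¹ * A * B := by ring
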